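/- arXiv:1709.06286 — 6 statements merged into one kernel-verified Lean document; each statement's English description precedes it below -/
import Mathlib

section
/- Let V be a finite-dimensional vector space over a field equipped with a (possibly degenerate on subspaces) non-degenerate reflexive sesquilinear form f, and let U ≤ V be a subspace with dim U = l. Then there exists a subspace W ≤ U such that the restriction of f to W is non-degenerate and dim W ≥ 2l - dim V. -/
/-!
Here `U^⊥ = {v | B v u = 0 for all u ∈ U}`. Non-degeneracy makes `B` injective into the
`σ`-semilinear dual of `V`, which has the same dimension as `V` for every `σ`, so `B` is onto it;
restricting to `U` then maps `V` onto the semilinear dual of `U`, whence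
`dim U^⊥ = dim V - dim U`. By reflexivity, any complement `W` of the radical `U ∩ U^⊥`
inside `U` is non-singular, and `dim W = dim U - dim (U ∩ U^⊥) ≥ 2 dim U - dim V`.
-/

open Module LinearMap

section SemilinearDual

variable {R M : Type*} [CommSemiring R] [AddCommMonoid M] [Module R M] (σ : R →+* R)

noncomputable def Module.Basis.semilinearDualEquivFun {ι : Type*} [Fintype ι] (b : Basis ι R M) :
    (M →ₛₗ[σ] R) ≃ₗ[R] (ι → R) where
  toFun f i := f (b i)
  map_add' _ _ := rfl
  map_smul' _ _ := rfl
  invFun a :=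
    { toFun := fun x => ∑ i, σ (b.repr x i) * a i
      map_add' := fun x y => by simp [add_mul, Finset.sum_add_distrib]
      map_smul' := fun c x => by simp [Finset.mul_sum, mul_assoc] }
  left_inv f := b.ext fun i => by classical simp [Finsupp.single_apply, apply_ite]
  right_inv a := by
    ext i
    classical simp [Finsupp.single_apply, apply_ite]

variable [StrongRankCondition R] [Module.Free R M] [Module.Finite R M]

instance Module.Finite.semilinearDual : Module.Finite R (M →ₛₗ[σ] R) :=
  .equiv ((Free.chooseBasis R M).semilinearDualEquivFun σ).symm

theorem finrank_semilinearDual : finrank R (M →ₛₗ[σ] R) = finrank R M := by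
  rw [((Free.chooseBasis R M).semilinearDualEquivFun σ).finrank_eq, finrank_fintype_fun_eq_card,
    finrank_eq_card_chooseBasisIndex]

end SemilinearDual

theorem LinearMap.exists_extendₛₗ {K V V' : Type*} [Field K] [AddCommGroup V] [Module K V]
    [AddCommGroup V'] [Module K V'] {σ : K →+* K} {p : Submodule K V} (f : p →ₛₗ[σ] V') :
    ∃ g : V →ₛₗ[σ] V', g.comp p.subtype = f :=
  let ⟨g, hg⟩ := p.subtype.exists_leftInverse_of_injective p.ker_subtype
  ⟨f.comp g, by rw [LinearMap.comp_assoc, hg, f.comp_id]⟩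

section Nondegenerate

variable {K V : Type*} [Field K] [AddCommGroup V] [Module K V] [FiniteDimensional K V]
  {σ : K →+* K} {B : V →ₗ[K] V →ₛₗ[σ] K}

theorem LinearMap.SeparatingLeft.surjective (hB : B.SeparatingLeft) : Function.Surjective B := by
  refine (injective_iff_surjective_of_finrank_eq_finrank (finrank_semilinearDual σ).symm).mp ?_
  rw [← ker_eq_bot, ← separatingLeft_iff_ker_eq_bot]
  exact hB

theorem LinearMap.SeparatingLeft.surjective_domRestrict₂ (hB : B.SeparatingLeft)
    (U : Submodule K V) : Function.Surjective (B.domRestrict₂ U) := by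
  intro g
  obtain ⟨f, rfl⟩ := LinearMap.exists_extendₛₗ g
  obtain ⟨v, rfl⟩ := hB.surjective f
  exact ⟨v, rfl⟩

theorem LinearMap.SeparatingLeft.finrank_ker_domRestrict₂_add (hB : B.SeparatingLeft)
    (U : Submodule K V) :
    finrank K (ker (B.domRestrict₂ U)) + finrank K U = finrank K V := by
  have hrank := finrank_range_add_finrank_ker (B.domRestrict₂ U)
  rw [range_eq_top.mpr (hB.surjective_domRestrict₂ U), finrank_top,
    finrank_semilinearDual] at hrank
  omega

end Nondegenerate

theorem LinearMap.IsRefl.separatingLeft_domRestrict₁₂ {R M P : Type*} [CommSemiring R]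
    [AddCommMonoid M] [Module R M] [AddCommMonoid P] [Module R P] {σ : R →+* R}
    {B : M →ₗ[R] M →ₛₗ[σ] P} (hB : B.IsRefl) {U W : Submodule R M}
    (hdisj : Disjoint (U ⊓ ker (B.domRestrict₂ U)) W)
    (hsup : U ⊓ ker (B.domRestrict₂ U) ⊔ W = U) :
    (B.domRestrict₁₂ W W).SeparatingLeft := by
  rintro ⟨x, hxW⟩ hx
  have hxU : x ∈ U := hsup ▸ Submodule.mem_sup_right hxW
  suffices hxrad : x ∈ ker (B.domRestrict₂ U) by
    simpa using hdisj.le_bot ⟨⟨hxU, hxrad⟩, hxW⟩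
  ext ⟨u, hu⟩
  obtain ⟨r, ⟨-, hr⟩, w, hw, rfl⟩ := Submodule.mem_sup.mp (hsup ▸ hu : u ∈ _)
  have hxr : B x r = 0 := hB r x (LinearMap.congr_fun hr ⟨x, hxU⟩)
  have hxw : B x w = 0 := hx ⟨w, hw⟩
  rw [domRestrict₂_apply, map_add, hxr, hxw, add_zero, zero_apply]

/-- For a finite-dimensional space `V` with a non-degenerate reflexive
sesquilinear form `B` and a subspace `U` of dimension `l`, there is a subspace `W ≤ U`
on which `B` restricts to a non-degenerate form and with `dim W ≥ 2l - dim V`. -/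
theorem exists_nonsingular_subspace {K V : Type*} [Field K] [AddCommGroup V] [Module K V]
    [FiniteDimensional K V] {σ : K →+* K}
    (B : V →ₗ[K] V →ₛₗ[σ] K) (hrefl : B.IsRefl) (hnd : B.SeparatingLeft)
    (U : Submodule K V) (l : ℕ) (hl : Module.finrank K U = l) :
    ∃ W : Submodule K V, W ≤ U ∧ (B.domRestrict₁₂ W W).SeparatingLeft ∧
      2 * (l : ℤ) - (Module.finrank K V : ℤ) ≤ (Module.finrank K W : ℤ) := by
  set rad := U ⊓ ker (B.domRestrict₂ U)
  obtain ⟨W, hdisj, hsup⟩ :=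
    IsModularLattice.exists_disjoint_and_sup_eq (inf_le_left : rad ≤ U)
  refine ⟨W, hsup ▸ le_sup_right, hrefl.separatingLeft_domRestrict₁₂ hdisj hsup, ?_⟩
  have hsplit := Submodule.finrank_sup_add_finrank_inf_eq rad W
  rw [hsup, hdisj.eq_bot, finrank_bot] at hsplit
  have hker := hnd.finrank_ker_domRestrict₂_add U
  have hrad : finrank K rad ≤ finrank K (ker (B.domRestrict₂ U)) :=
    Submodule.finrank_mono inf_le_right
  omega
end

section
/- Let V be a finite-dimensional vector space with a non-degenerate reflexive sesquilinear form f and U ≤ V a subspace. If W ≤ U is a maximal non-singular subspace of U, then f vanishes identically on W^⊥ ∩ U, U = W ⊕ (W^⊥ ∩ U), and U^⊥ ∩ U = W^⊥ ∩ U. -/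
/-- The orthogonal complement of a subspace with respect to a sesquilinear form. -/
def sesqOrth {K V : Type*} [Field K] [AddCommGroup V] [Module K V] {σ : K →+* K}
    (B : V →ₗ[K] V →ₛₗ[σ] K) (W : Submodule K V) : Submodule K V where
  carrier := {v | ∀ w ∈ W, B w v = 0}
  add_mem' := by
    intro a b ha hb w hw
    simp [ha w hw, hb w hw]
  zero_mem' := by
    intro w hw
    simp
  smul_mem' := by
    intro c v hv w hw
    simp only [Set.mem_setOf_eq] at hv ⊢
    rw [map_smulₛₗ, hv w hw, smul_zero]

theorem mem_sesqOrth_iff {K V : Type*} [Field K] [AddCommGroup V] [Module K V] {σ : K →+* K}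
    (B : V →ₗ[K] V →ₛₗ[σ] K) (W : Submodule K V) (v : V) :
    v ∈ sesqOrth B W ↔ ∀ w ∈ W, B w v = 0 := Iff.rfl

/-- if `W ≤ U` is a maximal non-singular subspace of `U`, then the form `B`
vanishes on `W^⊥ ∩ U`, `U = W ⊕ (W^⊥ ∩ U)`, and `U^⊥ ∩ U = W^⊥ ∩ U`. -/
theorem maximal_nonsingular_subspace {K V : Type*} [Field K] [AddCommGroup V] [Module K V]
    [FiniteDimensional K V] {σ : K →+* K}
    (B : V →ₗ[K] V →ₛₗ[σ] K) (hrefl : B.IsRefl) (hnd : B.SeparatingLeft)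
    (U W : Submodule K V) (hWU : W ≤ U) (hW : (B.domRestrict₁₂ W W).SeparatingLeft)
    (hmax : ∀ W' : Submodule K V, W' ≤ U → (B.domRestrict₁₂ W' W').SeparatingLeft →
      W ≤ W' → W' = W) :
    (∀ x ∈ sesqOrth B W ⊓ U, ∀ y ∈ sesqOrth B W ⊓ U, B x y = 0) ∧
    W ⊔ (sesqOrth B W ⊓ U) = U ∧ W ⊓ (sesqOrth B W ⊓ U) = ⊥ ∧
    sesqOrth B U ⊓ U = sesqOrth B W ⊓ U := by
  classical
  have hWs : ∀ v ∈ W, (∀ v' ∈ W, B v v' = 0) → v = 0 := by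
    intro v hv h
    have h0 : (⟨v, hv⟩ : W) = 0 := hW ⟨v, hv⟩ fun y => by
      simpa [LinearMap.domRestrict₁₂_apply] using h y y.2
    simpa using congrArg Subtype.val h0
  have hsepmk : ∀ W' : Submodule K V,
      (∀ v ∈ W', (∀ v' ∈ W', B v v' = 0) → v = 0) →
      (B.domRestrict₁₂ W' W').SeparatingLeft := by
    intro W' h z hz
    exact Subtype.ext (h z z.2 fun v hv => by
      simpa [LinearMap.domRestrict₁₂_apply] using hz ⟨v, hv⟩)
  -- diagonal vanishes on W^⊥ ∩ U
  have diag0 : ∀ x, x ∈ sesqOrth B W → x ∈ U → B x x = 0 := by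
    intro x hxO hxU
    by_contra hxx
    have hxW : x ∈ W := by
      have hW' := hmax (W ⊔ Submodule.span K {x})
        (sup_le hWU (Submodule.span_le.2 (Set.singleton_subset_iff.2 hxU))) ?_ le_sup_left
      · rw [← hW']
        exact Submodule.mem_sup_right (Submodule.mem_span_singleton_self x)
      · apply hsepmk
        intro z hz hz0
        obtain ⟨w, hw, s, hs, rfl⟩ := Submodule.mem_sup.1 hz
        obtain ⟨a, rfl⟩ := Submodule.mem_span_singleton.1 hs
        have hw0 : w = 0 := hWs w hw fun v' hv' => by
          have h1 := hz0 v' (Submodule.mem_sup_left hv')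
          have hx' : B x v' = 0 := hrefl _ _ (hxO v' hv')
          simpa [map_add, map_smul, hx'] using h1
        have h2 := hz0 x (Submodule.mem_sup_right (Submodule.mem_span_singleton_self x))
        simp only [hw0, map_add, map_smul, map_zero, LinearMap.add_apply,
          LinearMap.smul_apply, LinearMap.zero_apply, zero_add, smul_eq_mul] at h2
        rcases mul_eq_zero.1 h2 with ha | h
        · simp [hw0, ha]
        · exact absurd h hxx
    exact hxx (hxO x hxW)
  have part1 : ∀ x ∈ sesqOrth B W ⊓ U, ∀ y ∈ sesqOrth B W ⊓ U, B x y = 0 := by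
    intro x hx y hy
    obtain ⟨hxO, hxU⟩ := hx
    obtain ⟨hyO, hyU⟩ := hy
    by_contra hxy
    have hyx : B y x ≠ 0 := fun h => hxy (hrefl _ _ h)
    have hxW : x ∈ W := by
      have hW' := hmax (W ⊔ Submodule.span K {x} ⊔ Submodule.span K {y}) ?_ ?_ ?_
      · rw [← hW']
        exact Submodule.mem_sup_left
          (Submodule.mem_sup_right (Submodule.mem_span_singleton_self x))
      · exact sup_le (sup_le hWU (Submodule.span_le.2 (Set.singleton_subset_iff.2 hxU)))
          (Submodule.span_le.2 (Set.singleton_subset_iff.2 hyU))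
      · apply hsepmk
        intro z hz hz0
        obtain ⟨z1, hz1, s, hs, rfl⟩ := Submodule.mem_sup.1 hz
        obtain ⟨c, rfl⟩ := Submodule.mem_span_singleton.1 hs
        obtain ⟨w, hw, s2, hs2, rfl⟩ := Submodule.mem_sup.1 hz1
        obtain ⟨a, rfl⟩ := Submodule.mem_span_singleton.1 hs2
        have hmemW : W ≤ W ⊔ Submodule.span K {x} ⊔ Submodule.span K {y} :=
          le_trans le_sup_left le_sup_left
        have hw0 : w = 0 := hWs w hw fun v' hv' => by
          have h1 := hz0 v' (hmemW hv')
          have hx' : B x v' = 0 := hrefl _ _ (hxO v' hv')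
          have hy' : B y v' = 0 := hrefl _ _ (hyO v' hv')
          simpa [map_add, map_smul, hx', hy'] using h1
        have hxx : B x x = 0 := diag0 x hxO hxU
        have hc : c = 0 := by
          have h2 := hz0 x (Submodule.mem_sup_left
            (Submodule.mem_sup_right (Submodule.mem_span_singleton_self x)))
          simp only [hw0, map_add, map_smul, map_zero, LinearMap.add_apply,
            LinearMap.smul_apply, LinearMap.zero_apply, zero_add, smul_eq_mul, hxx,
            mul_zero] at h2
          exact (mul_eq_zero.1 h2).resolve_right hyx
        have ha : a = 0 := by
          have h3 := hz0 y (Submodule.mem_sup_right (Submodule.mem_span_singleton_self y))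
          simp only [hw0, hc, map_add, map_smul, map_zero, LinearMap.add_apply,
            LinearMap.smul_apply, LinearMap.zero_apply, zero_add, zero_smul, add_zero,
            smul_eq_mul, zero_mul] at h3
          exact (mul_eq_zero.1 h3).resolve_right hxy
        simp [hw0, hc, ha]
      · exact le_trans le_sup_left le_sup_left
    exact hxy (hyO x hxW)
  have hsup : W ⊔ (sesqOrth B W ⊓ U) = U := by
    refine le_antisymm (sup_le hWU inf_le_right) ?_
    intro u hu
    by_cases hsep : (B.domRestrict₁₂ (W ⊔ Submodule.span K {u})
        (W ⊔ Submodule.span K {u})).SeparatingLeft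
    · have hW' := hmax _ (sup_le hWU (Submodule.span_le.2 (Set.singleton_subset_iff.2 hu)))
        hsep le_sup_left
      exact Submodule.mem_sup_left
        (hW' ▸ Submodule.mem_sup_right (Submodule.mem_span_singleton_self u))
    · rw [LinearMap.SeparatingLeft] at hsep
      push_neg at hsep
      obtain ⟨z, hz0, hzne⟩ := hsep
      have hzv : ∀ v ∈ W ⊔ Submodule.span K {u}, B (z : V) v = 0 := fun v hv => by
        simpa [LinearMap.domRestrict₁₂_apply] using hz0 ⟨v, hv⟩
      obtain ⟨w, hw, s, hs, hzeq⟩ := Submodule.mem_sup.1 z.2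
      obtain ⟨a, rfl⟩ := Submodule.mem_span_singleton.1 hs
      have ha : a ≠ 0 := by
        rintro rfl
        apply hzne
        apply Subtype.ext
        simp only [zero_smul, add_zero] at hzeq
        show (z : V) = 0
        rw [← hzeq]
        exact hWs w hw fun v' hv' => by
          rw [hzeq]; exact hzv v' (Submodule.mem_sup_left hv')
      have hzO : (z : V) ∈ sesqOrth B W := fun w' hw' =>
        hrefl _ _ (hzv w' (Submodule.mem_sup_left hw'))
      have hzU : (z : V) ∈ U :=
        (sup_le hWU (Submodule.span_le.2 (Set.singleton_subset_iff.2 hu))) z.2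
      have hu' : u = a⁻¹ • (z : V) + (-(a⁻¹)) • w := by
        have h4 : a • u = (z : V) - w := by
          rw [← hzeq]; abel
        calc u = a⁻¹ • (a • u) := by rw [smul_smul, inv_mul_cancel₀ ha, one_smul]
        _ = a⁻¹ • ((z : V) - w) := by rw [h4]
        _ = a⁻¹ • (z : V) + (-(a⁻¹)) • w := by rw [smul_sub, neg_smul, sub_eq_add_neg]
      rw [hu']
      exact Submodule.add_mem _
        (Submodule.mem_sup_right ⟨Submodule.smul_mem _ _ hzO, Submodule.smul_mem _ _ hzU⟩)
        (Submodule.mem_sup_left (Submodule.smul_mem _ _ hw))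
  have hinf : W ⊓ (sesqOrth B W ⊓ U) = ⊥ := by
    rw [eq_bot_iff]
    rintro x ⟨hxW, hxO, _⟩
    exact Submodule.mem_bot K |>.2 (hWs x hxW fun v' hv' => hrefl _ _ (hxO v' hv'))
  have hpart3 : sesqOrth B U ⊓ U = sesqOrth B W ⊓ U := by
    apply le_antisymm
    · exact inf_le_inf_right _ fun x hx w hw => hx w (hWU hw)
    · rintro x ⟨hxO, hxU⟩
      refine ⟨fun u hu => ?_, hxU⟩
      rw [← hsup] at hu
      obtain ⟨w, hw, n, hn, rfl⟩ := Submodule.mem_sup.1 hu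
      rw [map_add, LinearMap.add_apply, hxO w hw, part1 n hn x ⟨hxO, hxU⟩, add_zero]
  exact ⟨part1, hsup, hinf, hpart3⟩
end

section
/- In H = SL_q(F_q), let h₁ = diag(1, λ, ..., λ) with λ ∈ F_q*. Then every element h of the k-fold product set (h₁^H ∪ (h₁⁻¹)^H)^{*k} has at least q - k eigenvalues (counted with multiplicity in the algebraic closure) lying in the cyclic subgroup ⟨λ⟩ of F_q*. -/
/-!
Each factor of `h` is conjugate to `diag(1, c, …, c)` with `c = λ` or `c = λ⁻¹ = λ^(q-2)`, so it
differs from the scalar matrix `c • 1` by a matrix of rank at most `1`. Since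
`AB - ab • 1 = A (B - b • 1) + b (A - a • 1)`, these defects add up along products: `h - μ • 1`
has rank at most `k` for some `μ ∈ ⟨λ⟩`. Hence the `μ`-eigenspace of `h` has dimension at least
`q - k`, and geometric multiplicity bounds algebraic multiplicity.
-/

open Polynomial

namespace Matrix

variable {K : Type*} [Field K] {m n : Type*} [Fintype n]

theorem rank_add_le (A B : Matrix m n K) : (A + B).rank ≤ A.rank + B.rank := by
  have hrange : LinearMap.range (A + B).mulVecLin ≤
      LinearMap.range A.mulVecLin ⊔ LinearMap.range B.mulVecLin := by
    rintro _ ⟨v, rfl⟩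
    rw [mulVecLin_add, LinearMap.add_apply]
    exact Submodule.add_mem_sup (LinearMap.mem_range_self _ v) (LinearMap.mem_range_self _ v)
  exact (Submodule.finrank_mono hrange).trans (Submodule.finrank_add_le_finrank_add_finrank _ _)

variable [DecidableEq n]

theorem rank_mul_sub_smul_one_le (A B : Matrix n n K) (a b : K) :
    (A * B - (a * b) • 1).rank ≤ (A - a • 1).rank + (B - b • 1).rank := by
  have hsplit : A * B - (a * b) • 1 = A * (B - b • 1) + (b • 1) * (A - a • 1) := by
    simp only [mul_sub, mul_smul_comm, smul_mul_assoc, mul_one, one_mul, smul_smul]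
    abel
  rw [hsplit, add_comm (A - a • 1).rank]
  exact (rank_add_le _ _).trans (add_le_add (rank_mul_le_right _ _) (rank_mul_le_right _ _))

theorem rank_ofFn_prod_sub_smul_one_le {k : ℕ} (A : Fin k → Matrix n n K) (c : Fin k → K) :
    ((List.ofFn A).prod - (List.ofFn c).prod • 1).rank ≤ ∑ i, (A i - c i • 1).rank := by
  induction k with
  | zero => simp
  | succ k ih =>
    rw [List.ofFn_succ, List.ofFn_succ, List.prod_cons, List.prod_cons, Fin.sum_univ_succ]
    exact (rank_mul_sub_smul_one_le _ _ _ _).trans (Nat.add_le_add_left (ih _ _) _)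

theorem rank_sub_smul_one_le_of_isConj {A B : Matrix n n K} (h : IsConj A B) (c : K) :
    (B - c • 1).rank ≤ (A - c • 1).rank := by
  obtain ⟨u, hu⟩ := h
  have hB : B - c • 1 = (u : Matrix n n K) * (A - c • 1) * (u⁻¹ : (Matrix n n K)ˣ) := by
    rw [mul_sub, sub_mul, hu.eq, mul_assoc, Units.mul_inv, mul_one, mul_smul_comm, mul_one,
      smul_mul_assoc, Units.mul_inv]
  rw [hB]
  exact (rank_mul_le_left _ _).trans (rank_mul_le_right _ _)

theorem rank_sub_inv_smul_one_le_of_mul_eq_one {A B : Matrix n n K} (hBA : B * A = 1) {c : K}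
    (hc : c ≠ 0) : (B - c⁻¹ • 1).rank ≤ (A - c • 1).rank := by
  have hB : B - c⁻¹ • 1 = (-c⁻¹ • B) * (A - c • 1) := by
    rw [mul_sub, smul_mul_assoc, hBA, smul_mul_assoc, mul_smul_comm, mul_one, smul_smul,
      neg_mul, inv_mul_cancel₀ hc, neg_smul, neg_smul, one_smul, sub_neg_eq_add]
    abel
  rw [hB]
  exact rank_mul_le_right _ _

theorem rank_diagonal_sub_smul_one_le_one {d : n → K} {c : K}
    (hd : {i | d i ≠ c}.Subsingleton) : (diagonal d - c • 1).rank ≤ 1 := by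
  classical
  rw [smul_one_eq_diagonal, diagonal_sub, rank_diagonal, Fintype.card_le_one_iff]
  rintro ⟨i, hi⟩ ⟨j, hj⟩
  exact Subtype.ext (hd (sub_ne_zero.1 hi) (sub_ne_zero.1 hj))

theorem card_sub_rank_le_rootMultiplicity_charpoly (A : Matrix n n K) (μ : K) :
    Fintype.card n - (A - μ • 1).rank ≤ A.charpoly.rootMultiplicity μ := by
  have hker : Module.End.eigenspace (toLin' A) μ = LinearMap.ker (A - μ • 1).mulVecLin := by
    rw [Module.End.eigenspace_def, ← toLin'_apply', map_sub, map_smul, toLin'_one]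
    rfl
  have hrank := LinearMap.finrank_range_add_finrank_ker (A - μ • 1).mulVecLin
  have hgeom := LinearMap.finrank_eigenspace_le (toLin' A) μ
  rw [hker, charpoly_toLin'] at hgeom
  rw [Module.finrank_fintype_fun_eq_card] at hrank
  rw [rank]
  omega

namespace SpecialLinearGroup

theorem exists_mem_powers_rank_sub_smul_one_le {g f : SpecialLinearGroup n K} {c : K} {r : ℕ}
    (hc : c ≠ 0) (hc_inv : c⁻¹ ∈ Submonoid.powers c)
    (hg : ((g : Matrix n n K) - c • 1).rank ≤ r)
    (hf : IsConj g f ∨ IsConj g⁻¹ f) :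
    ∃ c' ∈ Submonoid.powers c, ((f : Matrix n n K) - c' • 1).rank ≤ r := by
  have hconj {g' : SpecialLinearGroup n K} (h : IsConj g' f) (c' : K) :
      ((f : Matrix n n K) - c' • 1).rank ≤ ((g' : Matrix n n K) - c' • 1).rank := by
    have h' := coeMonoidHom.map_isConj h
    rw [coeMonoidHom_apply, coeMonoidHom_apply] at h'
    exact rank_sub_smul_one_le_of_isConj h' c'
  rcases hf with hf | hf
  · exact ⟨c, Submonoid.mem_powers c, (hconj hf c).trans hg⟩
  · have hg_inv : ((↑g⁻¹ : Matrix n n K) - c⁻¹ • 1).rank ≤ r := by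
      refine (rank_sub_inv_smul_one_le_of_mul_eq_one ?_ hc).trans hg
      rw [← coe_mul, inv_mul_cancel, coe_one]
    exact ⟨c⁻¹, hc_inv, (hconj hf c⁻¹).trans hg_inv⟩

end SpecialLinearGroup

end Matrix

theorem FiniteField.inv_mem_powers {F : Type*} [Field F] [Fintype F] {a : F} (ha : a ≠ 0) :
    a⁻¹ ∈ Submonoid.powers a := by
  refine ⟨Fintype.card F - 2, eq_inv_of_mul_eq_one_left ?_⟩
  have hcard : Fintype.card F - 2 + 1 = Fintype.card F - 1 := by
    have := Fintype.one_lt_card (α := F)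
    omega
  rw [← pow_succ, hcard, FiniteField.pow_card_sub_one_eq_one a ha]

theorem Multiset.count_le_countP {α : Type*} [DecidableEq α] {p : α → Prop} [DecidablePred p]
    {a : α} (ha : p a) (s : Multiset α) : s.count a ≤ s.countP p := by
  rw [count, countP_eq_card_filter, countP_eq_card_filter]
  exact card_le_card (monotone_filter_right s fun x hx => hx ▸ ha)

theorem Polynomial.rootMultiplicity_le_count_aroots {K L : Type*} [Field K] [Field L] [Algebra K L]
    [DecidableEq L] {p : K[X]} (hp : p ≠ 0) (a : K) :
    p.rootMultiplicity a ≤ (p.aroots L).count (algebraMap K L a) := by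
  rw [aroots_def, count_roots]
  exact le_rootMultiplicity_map (map_ne_zero hp) a

open Matrix

open Classical in
theorem eigenvalues_of_products_of_conjugates_general (q : ℕ) (F : Type*) [Field F] [Fintype F]
    (lam : F) (hlam : lam ≠ 0)
    (h₁ : Matrix.SpecialLinearGroup (Fin q) F)
    (hh₁ : (h₁ : Matrix (Fin q) (Fin q) F) =
      Matrix.diagonal (fun i : Fin q => if (i : ℕ) = 0 then 1 else lam))
    (k : ℕ) (h : Matrix.SpecialLinearGroup (Fin q) F)
    (hh : ∃ f : Fin k → Matrix.SpecialLinearGroup (Fin q) F,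
      (∀ i, IsConj h₁ (f i) ∨ IsConj h₁⁻¹ (f i)) ∧ h = (List.ofFn f).prod) :
    (q : ℤ) - (k : ℤ) ≤
      Multiset.countP (fun x => x ∈ Submonoid.powers (algebraMap F (AlgebraicClosure F) lam))
        ((Matrix.charpoly (h : Matrix (Fin q) (Fin q) F)).aroots (AlgebraicClosure F)) := by
  obtain ⟨f, hf, rfl⟩ := hh
  have hh₁_rank : ((h₁ : Matrix (Fin q) (Fin q) F) - lam • 1).rank ≤ 1 := by
    rw [hh₁]
    refine rank_diagonal_sub_smul_one_le_one <| Set.Subsingleton.anti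
      (t := {i | (i : ℕ) = 0}) (fun i hi j hj => Fin.ext (hi.trans hj.symm))
      fun i hi => of_not_not fun h0 => hi (if_neg h0)
  choose c hc_mem hc_rank using fun i =>
    SpecialLinearGroup.exists_mem_powers_rank_sub_smul_one_le hlam
      (FiniteField.inv_mem_powers hlam) hh₁_rank (hf i)
  set μ := (List.ofFn c).prod
  obtain ⟨m, hm⟩ : μ ∈ Submonoid.powers lam :=
    Submonoid.list_prod_mem _ (List.forall_mem_ofFn_iff.2 hc_mem)
  set M : Matrix (Fin q) (Fin q) F := ↑(List.ofFn f).prod with hM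
  have hrank : (M - μ • 1).rank ≤ k := by
    rw [hM, ← SpecialLinearGroup.coeMonoidHom_apply, map_list_prod, List.map_ofFn]
    refine (rank_ofFn_prod_sub_smul_one_le _ c).trans ?_
    simpa using Finset.sum_le_card_nsmul Finset.univ _ 1 fun i _ => hc_rank i
  have hmult := card_sub_rank_le_rootMultiplicity_charpoly M μ
  rw [Fintype.card_fin] at hmult
  calc (q : ℤ) - k ≤ ((q - k : ℕ) : ℤ) := by omega
    _ ≤ _ := by exact_mod_cast hmult.trans' (by omega)
    _ ≤ _ := Nat.cast_le.2 (rootMultiplicity_le_count_aroots (charpoly_monic M).ne_zero μ)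
    _ ≤ _ := Nat.cast_le.2 (Multiset.count_le_countP ⟨m, by rw [← hm, map_pow]⟩ _)

open Classical in
/-- in `H = SL_q(F_q)`, with `h₁ = diag(1, λ, …, λ)`, every element of
`(h₁^H ∪ (h₁⁻¹)^H)^{*k}` has at least `q - k` eigenvalues (with multiplicity, in the
algebraic closure) lying in the subgroup generated by `λ`. -/
theorem eigenvalues_of_products_of_conjugates (q : ℕ) (F : Type*) [Field F] [Fintype F]
    (hF : Fintype.card F = q) (lam : F) (hlam : lam ≠ 0)
    (h₁ : Matrix.SpecialLinearGroup (Fin q) F)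
    (hh₁ : (h₁ : Matrix (Fin q) (Fin q) F) =
      Matrix.diagonal (fun i : Fin q => if (i : ℕ) = 0 then 1 else lam))
    (k : ℕ) (h : Matrix.SpecialLinearGroup (Fin q) F)
    (hh : ∃ f : Fin k → Matrix.SpecialLinearGroup (Fin q) F,
      (∀ i, IsConj h₁ (f i) ∨ IsConj h₁⁻¹ (f i)) ∧ h = (List.ofFn f).prod) :
    (q : ℤ) - (k : ℤ) ≤
      Multiset.countP (fun x => x ∈ Submonoid.powers (algebraMap F (AlgebraicClosure F) lam))
        ((Matrix.charpoly (h : Matrix (Fin q) (Fin q) F)).aroots (AlgebraicClosure F)) :=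
  eigenvalues_of_products_of_conjugates_general q F lam hlam h₁ hh₁ k h hh
end

section
/- Let λ, μ ∈ F_q* with λ ∉ ⟨μ⟩ and μ ∉ ⟨λ⟩, and let h₁ = diag(1, λ, ..., λ), h₂ = diag(1, μ, ..., μ) in H = SL_q(F_q). Then for all k ≤ q - 1, h₂ ∉ (h₁^H ∪ (h₁⁻¹)^H)^{*k} and h₁ ∉ (h₂^H ∪ (h₂⁻¹)^H)^{*k}. -/
set_option maxHeartbeats 1000000
set_option linter.unusedSectionVars false

open Matrix

section Aux

variable {q : ℕ} {F : Type*} [Field F] [Fintype F]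

private lemma matrix_rank_add_le (A B : Matrix (Fin q) (Fin q) F) :
    (A + B).rank ≤ A.rank + B.rank := by
  classical
  have hle : LinearMap.range (A + B).mulVecLin ≤
      LinearMap.range A.mulVecLin ⊔ LinearMap.range B.mulVecLin := by
    rintro y ⟨x, rfl⟩
    rw [Matrix.mulVecLin_add]
    exact Submodule.add_mem_sup (LinearMap.mem_range_self _ x) (LinearMap.mem_range_self _ x)
  have h1 := Submodule.finrank_mono hle
  have h2 := Submodule.finrank_sup_add_finrank_inf_eq
    (LinearMap.range A.mulVecLin) (LinearMap.range B.mulVecLin)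
  unfold Matrix.rank
  omega

private lemma matrix_rank_smul_le (a : F) (A : Matrix (Fin q) (Fin q) F) :
    (a • A).rank ≤ A.rank := by
  have : a • A = (a • (1 : Matrix (Fin q) (Fin q) F)) * A := by
    rw [Matrix.smul_mul, one_mul]
  rw [this]
  exact Matrix.rank_mul_le_right _ _

private lemma rank_prod_sub (L : List (Matrix (Fin q) (Fin q) F × F))
    (hL : ∀ p ∈ L, (p.1 - p.2 • (1 : Matrix (Fin q) (Fin q) F)).rank ≤ 1) :
    ((L.map Prod.fst).prod - (L.map Prod.snd).prod • (1 : Matrix (Fin q) (Fin q) F)).rank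
      ≤ L.length := by
  induction L with
  | nil => simp
  | cons p L ih =>
    simp only [List.map_cons, List.prod_cons, List.length_cons]
    have key : p.1 * (L.map Prod.fst).prod
        - (p.2 * (L.map Prod.snd).prod) • (1 : Matrix (Fin q) (Fin q) F)
        = p.1 * ((L.map Prod.fst).prod - (L.map Prod.snd).prod • 1)
          + (L.map Prod.snd).prod • (p.1 - p.2 • 1) := by
      rw [mul_sub, Matrix.mul_smul, mul_one, smul_sub, smul_smul, sub_add_sub_cancel,
        mul_comm p.2]
    rw [key]
    refine le_trans (matrix_rank_add_le _ _) ?_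
    have h1 : (p.1 * ((L.map Prod.fst).prod - (L.map Prod.snd).prod • 1)).rank
        ≤ L.length := le_trans (Matrix.rank_mul_le_right _ _) (ih fun x hx => hL x (.tail _ hx))
    have h2 : ((L.map Prod.snd).prod • (p.1 - p.2 • (1 : Matrix (Fin q) (Fin q) F))).rank
        ≤ 1 := le_trans (matrix_rank_smul_le _ _) (hL p (.head _))
    omega

end Aux

section Aux2

variable {q : ℕ} {F : Type*} [Field F] [Fintype F]

private lemma exists_kernel_vec (hq2 : 2 ≤ q) (A : Matrix (Fin q) (Fin q) F)
    (hA : A.rank ≤ q - 2) :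
    ∃ x : Fin q → F, x ≠ 0 ∧ x ⟨0, by omega⟩ = 0 ∧ A.mulVec x = 0 := by
  classical
  have hfin : Module.finrank F (Fin q → F) = q := by
    rw [Module.finrank_fintype_fun_eq_card, Fintype.card_fin]
  have hrn := LinearMap.finrank_range_add_finrank_ker A.mulVecLin
  rw [hfin] at hrn
  have hrr : Module.finrank F (LinearMap.range A.mulVecLin) = A.rank := rfl
  rw [hrr] at hrn
  have hKdim : 2 ≤ Module.finrank F (LinearMap.ker A.mulVecLin) := by omega
  set φ : (LinearMap.ker A.mulVecLin) →ₗ[F] F :=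
    (LinearMap.proj (⟨0, by omega⟩ : Fin q)).comp
      (Submodule.subtype (LinearMap.ker A.mulVecLin)) with hφ
  have hninj : ¬ Function.Injective φ := by
    intro hinj
    have := LinearMap.finrank_le_finrank_of_injective hinj
    rw [Module.finrank_self] at this
    omega
  rw [← LinearMap.ker_eq_bot] at hninj
  obtain ⟨y, hy, hyne⟩ := Submodule.ne_bot_iff _ |>.mp hninj
  refine ⟨(y : Fin q → F), ?_, ?_, ?_⟩
  · simpa using hyne
  · simpa [hφ] using hy
  · have h2 : A.mulVecLin (y : Fin q → F) = 0 := y.2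
    rwa [Matrix.mulVecLin_apply] at h2

private lemma conj_decomp {g h : Matrix.SpecialLinearGroup (Fin q) F}
    (hc : IsConj h g) :
    ∃ C C' : Matrix (Fin q) (Fin q) F, C * C' = 1 ∧
      (g : Matrix (Fin q) (Fin q) F) = C * (h : Matrix (Fin q) (Fin q) F) * C' := by
  obtain ⟨c, hc⟩ := isConj_iff.mp hc
  refine ⟨(c : Matrix (Fin q) (Fin q) F), ((c⁻¹ : Matrix.SpecialLinearGroup (Fin q) F) :
    Matrix (Fin q) (Fin q) F), ?_, ?_⟩
  · rw [← Matrix.SpecialLinearGroup.coe_mul, mul_inv_cancel, Matrix.SpecialLinearGroup.coe_one]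
  · rw [← hc]
    simp [Matrix.SpecialLinearGroup.coe_mul]

private lemma conj_sub_smul {g h : Matrix.SpecialLinearGroup (Fin q) F}
    (hc : IsConj h g) (a : F) :
    ∃ C C' : Matrix (Fin q) (Fin q) F, C * C' = 1 ∧
      ((g : Matrix (Fin q) (Fin q) F) - a • 1) =
        C * ((h : Matrix (Fin q) (Fin q) F) - a • 1) * C' := by
  obtain ⟨C, C', hCC', hg⟩ := conj_decomp hc
  refine ⟨C, C', hCC', ?_⟩
  rw [mul_sub, sub_mul, Matrix.mul_smul, mul_one, Matrix.smul_mul, hCC', hg]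

private lemma conj_det_sub {g h : Matrix.SpecialLinearGroup (Fin q) F}
    (hc : IsConj h g) (a : F) :
    ((g : Matrix (Fin q) (Fin q) F) - a • 1).det =
      ((h : Matrix (Fin q) (Fin q) F) - a • 1).det := by
  obtain ⟨C, C', hCC', hg⟩ := conj_sub_smul hc a
  have hdet : C.det * C'.det = 1 := by rw [← Matrix.det_mul, hCC', Matrix.det_one]
  rw [hg, Matrix.det_mul, Matrix.det_mul, mul_comm C.det, mul_assoc, hdet, mul_one]

private lemma conj_rank_sub {g h : Matrix.SpecialLinearGroup (Fin q) F}
    (hc : IsConj h g) (a : F) :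
    ((g : Matrix (Fin q) (Fin q) F) - a • 1).rank ≤
      ((h : Matrix (Fin q) (Fin q) F) - a • 1).rank := by
  obtain ⟨C, C', hCC', hg⟩ := conj_sub_smul hc a
  rw [hg]
  exact le_trans (Matrix.rank_mul_le_left _ _) (Matrix.rank_mul_le_right _ _)

end Aux2

section Aux3

variable {q : ℕ} {F : Type*} [Field F] [Fintype F]

private lemma rank_D_le (c : F) :
    (Matrix.diagonal (fun j : Fin q => if (j : ℕ) = 0 then 1 else c)
      - c • (1 : Matrix (Fin q) (Fin q) F)).rank ≤ 1 := by
  classical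
  rw [Matrix.smul_one_eq_diagonal, Matrix.diagonal_sub, Matrix.rank_diagonal]
  refine Fintype.card_le_one_iff.mpr ?_
  rintro ⟨i, hi⟩ ⟨j, hj⟩
  have hi0 : (i : ℕ) = 0 := by
    by_contra h
    exact hi (by simp [h])
  have hj0 : (j : ℕ) = 0 := by
    by_contra h
    exact hj (by simp [h])
  exact Subtype.ext (Fin.ext (hi0.trans hj0.symm))

private lemma key (q : ℕ) (F : Type*) [Field F] [Fintype F]
    (hF : Fintype.card F = q) (lam mu : F) (hlam : lam ≠ 0) (hmu : mu ≠ 0)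
    (hml : mu ∉ Submonoid.powers lam)
    (h₁ h₂ : Matrix.SpecialLinearGroup (Fin q) F)
    (hh₁ : (h₁ : Matrix (Fin q) (Fin q) F) =
      Matrix.diagonal (fun i : Fin q => if (i : ℕ) = 0 then 1 else lam))
    (hh₂ : (h₂ : Matrix (Fin q) (Fin q) F) =
      Matrix.diagonal (fun i : Fin q => if (i : ℕ) = 0 then 1 else mu))
    (k : ℕ) (hk : k ≤ q - 1) (f : Fin k → Matrix.SpecialLinearGroup (Fin q) F)
    (hconj : ∀ i, IsConj h₁ (f i) ∨ IsConj h₁⁻¹ (f i))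
    (hprod : h₂ = (List.ofFn f).prod) : False := by
  classical
  have hq2 : 2 ≤ q := hF ▸ Fintype.one_lt_card
  have hmu1 : mu ≠ 1 := fun h => hml ⟨0, by simp [h]⟩
  have hpow : lam ^ (q - 1) = 1 := by
    have := FiniteField.pow_card_sub_one_eq_one lam hlam
    rwa [hF] at this
  have hinvpow : lam ^ (q - 2) = lam⁻¹ := by
    refine eq_inv_of_mul_eq_one_left ?_
    rw [← pow_succ, show q - 2 + 1 = q - 1 by omega, hpow]
  have hmem_inv : lam⁻¹ ∈ Submonoid.powers lam := ⟨q - 2, hinvpow⟩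
  have hmem_lam : lam ∈ Submonoid.powers lam := ⟨1, pow_one lam⟩
  -- coe of h₁⁻¹
  have h1inv : ((h₁⁻¹ : Matrix.SpecialLinearGroup (Fin q) F) : Matrix (Fin q) (Fin q) F)
      = Matrix.diagonal (fun i : Fin q => if (i : ℕ) = 0 then 1 else lam⁻¹) := by
    have hDinv : (h₁ : Matrix (Fin q) (Fin q) F) *
        Matrix.diagonal (fun i : Fin q => if (i : ℕ) = 0 then 1 else lam⁻¹) = 1 := by
      rw [hh₁, Matrix.diagonal_mul_diagonal]
      have he : (fun i : Fin q => (if (i : ℕ) = 0 then (1 : F) else lam) *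
          (if (i : ℕ) = 0 then 1 else lam⁻¹)) = fun _ => 1 := by
        funext i
        split
        · rw [one_mul]
        · rw [mul_inv_cancel₀ hlam]
      rw [he, Matrix.diagonal_one]
    have h1 : ((h₁⁻¹ : Matrix.SpecialLinearGroup (Fin q) F) : Matrix (Fin q) (Fin q) F) *
        (h₁ : Matrix (Fin q) (Fin q) F) = 1 := by
      rw [← Matrix.SpecialLinearGroup.coe_mul, inv_mul_cancel, Matrix.SpecialLinearGroup.coe_one]
    calc ((h₁⁻¹ : Matrix.SpecialLinearGroup (Fin q) F) : Matrix (Fin q) (Fin q) F)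
        = ((h₁⁻¹ : Matrix.SpecialLinearGroup (Fin q) F) : Matrix (Fin q) (Fin q) F) *
          ((h₁ : Matrix (Fin q) (Fin q) F) *
            Matrix.diagonal (fun i : Fin q => if (i : ℕ) = 0 then 1 else lam⁻¹)) := by
          rw [hDinv, mul_one]
      _ = _ := by rw [← mul_assoc, h1, one_mul]
  -- per-factor data
  have H : ∀ i : Fin k, ∃ c : F, c ∈ Submonoid.powers lam ∧
      ((f i : Matrix (Fin q) (Fin q) F) - c • 1).rank ≤ 1 ∧
      ∀ a : F, ((f i : Matrix (Fin q) (Fin q) F) - a • 1).det =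
        (Matrix.diagonal (fun j : Fin q => if (j : ℕ) = 0 then 1 else c)
          - a • (1 : Matrix (Fin q) (Fin q) F)).det := by
    intro i
    rcases hconj i with hc | hc
    · refine ⟨lam, hmem_lam, ?_, fun a => ?_⟩
      · have h2 := conj_rank_sub hc lam
        rw [hh₁] at h2
        exact le_trans h2 (rank_D_le lam)
      · have h2 := conj_det_sub hc a
        rwa [hh₁] at h2
    · refine ⟨lam⁻¹, hmem_inv, ?_, fun a => ?_⟩
      · have h2 := conj_rank_sub hc lam⁻¹
        rw [h1inv] at h2
        exact le_trans h2 (rank_D_le lam⁻¹)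
      · have h2 := conj_det_sub hc a
        rwa [h1inv] at h2
  choose c hcmem hcrank hcdet using H
  -- k = 0 case
  rcases Nat.eq_zero_or_pos k with rfl | hkpos
  · have h2one : h₂ = 1 := by rw [hprod, List.ofFn_zero, List.prod_nil]
    have hco : (h₂ : Matrix (Fin q) (Fin q) F) = 1 := by
      rw [h2one, Matrix.SpecialLinearGroup.coe_one]
    rw [hh₂] at hco
    have h3 := congrFun (congrFun hco ⟨1, by omega⟩) ⟨1, by omega⟩
    rw [Matrix.diagonal_apply_eq, Matrix.one_apply_eq] at h3
    simp only [show (((⟨1, by omega⟩ : Fin q)) : ℕ) = 1 from rfl, one_ne_zero, if_false] at h3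
    exact hmu1 h3
  obtain ⟨m, rfl⟩ := Nat.exists_eq_succ_of_ne_zero (by omega : k ≠ 0)
  -- the tail list
  set L : List (Matrix (Fin q) (Fin q) F × F) :=
    List.ofFn (fun j : Fin m => ((f j.succ : Matrix (Fin q) (Fin q) F), c j.succ)) with hL
  have hmapfst : L.map Prod.fst = List.ofFn (fun j : Fin m => (f j.succ : Matrix (Fin q) (Fin q) F)) := by
    rw [hL, List.map_ofFn]
    rfl
  have hmapsnd : L.map Prod.snd = List.ofFn (fun j : Fin m => c j.succ) := by
    rw [hL, List.map_ofFn]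
    rfl
  set c' := (List.ofFn (fun j : Fin m => c j.succ)).prod with hc'
  have hc'mem : c' ∈ Submonoid.powers lam := by
    refine Submonoid.list_prod_mem _ ?_
    intro x hx
    rw [List.mem_ofFn] at hx
    obtain ⟨j, rfl⟩ := hx
    exact hcmem _
  have hc'ne : c' ≠ 0 := by
    obtain ⟨n, hn⟩ := hc'mem
    rw [← hn]
    exact pow_ne_zero _ hlam
  -- rank bound and kernel vector
  have hrank := rank_prod_sub L ?_
  swap
  · rintro p hp
    rw [hL, List.mem_ofFn] at hp
    obtain ⟨j, rfl⟩ := hp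
    exact hcrank _
  rw [hmapfst, hmapsnd, ← hc'] at hrank
  have hlen : L.length = m := by rw [hL, List.length_ofFn]
  rw [hlen] at hrank
  set P := (List.ofFn (fun j : Fin m => (f j.succ : Matrix (Fin q) (Fin q) F))).prod with hP
  obtain ⟨x, hxne, hx0, hxker⟩ := exists_kernel_vec hq2 _ (le_trans hrank (by omega : m ≤ q - 2))
  -- product splitting
  have hcoe : ∀ l : List (Matrix.SpecialLinearGroup (Fin q) F),
      ((l.prod : Matrix.SpecialLinearGroup (Fin q) F) : Matrix (Fin q) (Fin q) F)
        = (l.map (fun g : Matrix.SpecialLinearGroup (Fin q) F =>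
            (g : Matrix (Fin q) (Fin q) F))).prod := by
    intro l
    induction l with
    | nil => simp
    | cons a l ih =>
      rw [List.prod_cons, List.map_cons, List.prod_cons, Matrix.SpecialLinearGroup.coe_mul, ih]
  have hsplit : (h₂ : Matrix (Fin q) (Fin q) F) = (f 0 : Matrix (Fin q) (Fin q) F) * P := by
    rw [hprod, List.ofFn_succ, List.prod_cons, Matrix.SpecialLinearGroup.coe_mul, hcoe,
      List.map_ofFn, hP]
    rfl
  -- mulVec computations
  have hPx : P.mulVec x = c' • x := by
    rw [Matrix.sub_mulVec, Matrix.smul_mulVec, Matrix.one_mulVec] at hxker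
    exact sub_eq_zero.mp hxker
  have hh₂x : (h₂ : Matrix (Fin q) (Fin q) F).mulVec x = mu • x := by
    rw [hh₂]
    funext i
    rw [Matrix.mulVec_diagonal]
    by_cases hi : (i : ℕ) = 0
    · have hieq : i = ⟨0, by omega⟩ := Fin.ext hi
      rw [if_pos hi, Pi.smul_apply, hieq, hx0]
      simp
    · rw [if_neg hi]
      simp
  have hgx : (f 0 : Matrix (Fin q) (Fin q) F).mulVec x = (mu * c'⁻¹) • x := by
    have h1 : (h₂ : Matrix (Fin q) (Fin q) F).mulVec x
        = (f 0 : Matrix (Fin q) (Fin q) F).mulVec (P.mulVec x) := by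
      rw [hsplit, ← Matrix.mulVec_mulVec]
    rw [hh₂x, hPx, Matrix.mulVec_smul] at h1
    have h2 := congrArg (fun v => c'⁻¹ • v) h1
    simp only [smul_smul] at h2
    rw [inv_mul_cancel₀ hc'ne, one_smul] at h2
    rw [← h2, mul_comm c'⁻¹ mu]
  -- determinant vanishing
  have hdet0 : ((f 0 : Matrix (Fin q) (Fin q) F) - (mu * c'⁻¹) • 1).det = 0 := by
    refine Matrix.exists_mulVec_eq_zero_iff.mp ⟨x, hxne, ?_⟩
    rw [Matrix.sub_mulVec, hgx, Matrix.smul_mulVec, Matrix.one_mulVec, sub_self]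
  rw [hcdet 0 (mu * c'⁻¹), Matrix.smul_one_eq_diagonal, Matrix.diagonal_sub,
    Matrix.det_diagonal] at hdet0
  obtain ⟨i, _, hi⟩ := Finset.prod_eq_zero_iff.mp hdet0
  rw [sub_eq_zero] at hi
  by_cases h0 : (i : ℕ) = 0
  · rw [if_pos h0] at hi
    have hmc : mu = c' := (mul_inv_eq_one₀ hc'ne).mp hi.symm
    exact hml (hmc ▸ hc'mem)
  · rw [if_neg h0] at hi
    have hmc : mu = c 0 * c' := by
      rw [hi, mul_assoc, inv_mul_cancel₀ hc'ne, mul_one]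
    exact hml (hmc ▸ Submonoid.mul_mem _ (hcmem 0) hc'mem)

end Aux3

/-- with `λ ∉ ⟨μ⟩` and `μ ∉ ⟨λ⟩`, and `h₁ = diag(1, λ, …, λ)`,
`h₂ = diag(1, μ, …, μ)` in `H = SL_q(F_q)`, for all `k ≤ q - 1` one has
`h₂ ∉ (h₁^H ∪ (h₁⁻¹)^H)^{*k}` and `h₁ ∉ (h₂^H ∪ (h₂⁻¹)^H)^{*k}`. -/
theorem not_products_of_conjugates (q : ℕ) (F : Type*) [Field F] [Fintype F]
    (hF : Fintype.card F = q) (lam mu : F) (hlam : lam ≠ 0) (hmu : mu ≠ 0)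
    (hlm : lam ∉ Submonoid.powers mu) (hml : mu ∉ Submonoid.powers lam)
    (h₁ h₂ : Matrix.SpecialLinearGroup (Fin q) F)
    (hh₁ : (h₁ : Matrix (Fin q) (Fin q) F) =
      Matrix.diagonal (fun i : Fin q => if (i : ℕ) = 0 then 1 else lam))
    (hh₂ : (h₂ : Matrix (Fin q) (Fin q) F) =
      Matrix.diagonal (fun i : Fin q => if (i : ℕ) = 0 then 1 else mu)) :
    ∀ k ≤ q - 1,
      (¬ ∃ f : Fin k → Matrix.SpecialLinearGroup (Fin q) F,
        (∀ i, IsConj h₁ (f i) ∨ IsConj h₁⁻¹ (f i)) ∧ h₂ = (List.ofFn f).prod) ∧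
      (¬ ∃ f : Fin k → Matrix.SpecialLinearGroup (Fin q) F,
        (∀ i, IsConj h₂ (f i) ∨ IsConj h₂⁻¹ (f i)) ∧ h₁ = (List.ofFn f).prod) := by
  intro k hk
  constructor
  · rintro ⟨f, hcj, hpr⟩
    exact key q F hF lam mu hlam hmu hml h₁ h₂ hh₁ hh₂ k hk f hcj hpr
  · rintro ⟨f, hcj, hpr⟩
    exact key q F hF mu lam hmu hlam hlm h₂ h₁ hh₂ hh₁ k hk f hcj hpr
end

section
/- Let G be a group with normal subgroups N₁ ≤ N^{rk}, A₁ ≤ N^{pr} ≤ G such that N^{pr} = N^{rk}·A₁ and N^{rk} ∩ A₁ = N₁. Then the maps Φ: N ↦ (N ∩ N^{rk}, N ∩ A₁) and Ψ: (M, A) ↦ MA, between {normal N : N₁ ≤ N ≤ N^{pr}, and N = (N∩N^{rk})(N∩A₁)} and pairs (M, A) of normal subgroups with N₁ ≤ M ≤ N^{rk} and N₁ ≤ A ≤ A₁, satisfy Φ∘Ψ = id; specifically, for such M and A, MA ∩ N^{rk} = M and MA ∩ A₁ = A. -/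
open Pointwise

lemma dedekind_mod {G : Type*} [Group G] {M A Z : Subgroup G} (hA : A.Normal)
    (h : M ≤ Z) : (M ⊔ A) ⊓ Z = M ⊔ (A ⊓ Z) := by
  apply le_antisymm
  · intro x hx
    have hx1 : x ∈ M ⊔ A := hx.1
    have hx2 : x ∈ Z := hx.2
    have hmem : x ∈ ((M : Set G) * (A : Set G)) := by
      rw [← @Subgroup.mul_normal _ _ M A hA]; exact hx1
    obtain ⟨m, hm, a, ha, rfl⟩ := hmem
    have haZ : a ∈ Z := by
      have := mul_mem (inv_mem (h hm)) hx2
      simpa using this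
    exact Subgroup.mul_mem_sup hm ⟨ha, haZ⟩
  · exact le_inf (sup_le_sup_left inf_le_left M)
      (sup_le h inf_le_right)

/-- with normal subgroups `N₁ ≤ N^{rk}`, `A₁ ≤ N^{pr}` satisfying
`N^{pr} = N^{rk}·A₁` and `N^{rk} ∩ A₁ = N₁`, for all normal `M, A` with `N₁ ≤ M ≤ N^{rk}` and
`N₁ ≤ A ≤ A₁` one has `MA ∩ N^{rk} = M` and `MA ∩ A₁ = A`; hence `Φ ∘ Ψ = id`. -/
theorem phi_psi_id {G : Type*} [Group G] (N₁ Nrk A₁ Npr : Subgroup G)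
    (hN₁ : N₁.Normal) (hNrk : Nrk.Normal) (hA₁ : A₁.Normal) (hNpr : Npr.Normal)
    (hN₁Nrk : N₁ ≤ Nrk) (hA₁Npr : A₁ ≤ Npr) (hNrkNpr : Nrk ≤ Npr)
    (hprod : Nrk ⊔ A₁ = Npr) (hint : Nrk ⊓ A₁ = N₁) :
    ∀ M A : Subgroup G, M.Normal → A.Normal →
      N₁ ≤ M → M ≤ Nrk → N₁ ≤ A → A ≤ A₁ →
      (M ⊔ A) ⊓ Nrk = M ∧ (M ⊔ A) ⊓ A₁ = A := by
  intro M A hM hA hN₁M hMNrk hN₁A hAA₁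
  constructor
  · rw [dedekind_mod hA hMNrk]
    have : A ⊓ Nrk ≤ M := fun x hx =>
      hN₁M (hint ▸ (⟨hx.2, hAA₁ hx.1⟩ : x ∈ Nrk ⊓ A₁))
    exact sup_eq_left.mpr this
  · rw [sup_comm, dedekind_mod hM hAA₁]
    have : M ⊓ A₁ ≤ A := fun x hx =>
      hN₁A (hint ▸ (⟨hMNrk hx.1, hx.2⟩ : x ∈ Nrk ⊓ A₁))
    exact sup_eq_left.mpr this
end

section
/- Let H be a group acting linearly on a vector space V, let g, h ∈ H, λ a scalar, and let U be the λ-eigenspace of h. Then every vector w in W := U ∩ g⁻¹(U) satisfies [g, h]·w = w, where [g,h] = g⁻¹h⁻¹gh. Consequently rk(1 - [g,h]) ≤ dim V - dim(U ∩ g⁻¹U) ≤ 2(dim V - dim U). -/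
/-- for invertible linear maps `g, h` on `V`, a scalar `λ` and `U` the
`λ`-eigenspace of `h`, every `w ∈ U ∩ g⁻¹(U)` is fixed by the commutator `[g,h] = g⁻¹h⁻¹gh`;
consequently `rk(1 - [g,h]) ≤ dim V - dim(U ∩ g⁻¹U) ≤ 2(dim V - dim U)`. -/
theorem commutator_fixes_eigenspace_intersection {K V : Type*} [Field K] [AddCommGroup V]
    [Module K V] [FiniteDimensional K V] (g h : V ≃ₗ[K] V) (lam : K)
    (U : Submodule K V) (hU : U = Module.End.eigenspace (h : V →ₗ[K] V) lam) :
    (∀ w ∈ U ⊓ Submodule.comap (g : V →ₗ[K] V) U, (g⁻¹ * h⁻¹ * g * h) w = w) ∧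
    Module.finrank K
        (LinearMap.range ((1 : V →ₗ[K] V) - ((g⁻¹ * h⁻¹ * g * h : V ≃ₗ[K] V) : V →ₗ[K] V))) ≤
      Module.finrank K V - Module.finrank K ↥(U ⊓ Submodule.comap (g : V →ₗ[K] V) U) ∧
    Module.finrank K V - Module.finrank K ↥(U ⊓ Submodule.comap (g : V →ₗ[K] V) U) ≤
      2 * (Module.finrank K V - Module.finrank K ↥U) := by
  have hfix : ∀ w ∈ U ⊓ Submodule.comap (g : V →ₗ[K] V) U,
      (g⁻¹ * h⁻¹ * g * h) w = w := by
    intro w hw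
    obtain ⟨hw1, hw2⟩ := hw
    rw [hU] at hw1 hw2
    have e1 : h w = lam • w := by
      have := (Module.End.mem_eigenspace_iff).mp hw1
      simpa using this
    have e2 : h (g w) = lam • g w := by
      have := (Module.End.mem_eigenspace_iff).mp hw2
      simpa using this
    have e3 : h⁻¹ (lam • g w) = g w := by
      rw [← e2]; exact h.symm_apply_apply _
    show g⁻¹ (h⁻¹ (g (h w))) = w
    rw [e1, map_smul, e3]
    exact g.symm_apply_apply w
  refine ⟨hfix, ?_, ?_⟩
  · -- rank ≤ dim V - dim W
    set c : V →ₗ[K] V := (1 : V →ₗ[K] V) - ((g⁻¹ * h⁻¹ * g * h : V ≃ₗ[K] V) : V →ₗ[K] V)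
    have hker : U ⊓ Submodule.comap (g : V →ₗ[K] V) U ≤ LinearMap.ker c := by
      intro w hw
      have := hfix w hw
      simp only [LinearMap.mem_ker, c, LinearMap.sub_apply, Module.End.one_apply,
        LinearEquiv.coe_coe]
      rw [this]; simp
    have hdim := Submodule.finrank_mono hker
    have hrn := LinearMap.finrank_range_add_finrank_ker c
    omega
  · -- dim V - dim W ≤ 2 (dim V - dim U)
    have hU' : Module.finrank K ↥(Submodule.comap (g : V →ₗ[K] V) U) = Module.finrank K ↥U := by
      have : Submodule.comap (g : V →ₗ[K] V) U = Submodule.map (g.symm : V →ₗ[K] V) U := by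
        ext x
        constructor
        · intro hx; exact ⟨g x, hx, g.symm_apply_apply x⟩
        · rintro ⟨y, hy, rfl⟩
          simpa [Submodule.mem_comap, g.apply_symm_apply] using hy
      rw [this]
      exact LinearEquiv.finrank_map_eq g.symm U
    have h1 := Submodule.finrank_sup_add_finrank_inf_eq U (Submodule.comap (g : V →ₗ[K] V) U)
    have h2 : Module.finrank K ↥(U ⊔ Submodule.comap (g : V →ₗ[K] V) U) ≤
        Module.finrank K V := Submodule.finrank_le _
    have h3 : Module.finrank K ↥U ≤ Module.finrank K V := Submodule.finrank_le _
    have h4 : Module.finrank K ↥(U ⊓ Submodule.comap (g : V →ₗ[K] V) U) ≤ Module.finrank K V :=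
      Submodule.finrank_le _
    omega
end
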